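/- arXiv:1806.02185 — 6 statements merged into one kernel-verified Lean document; each statement's English description precedes it below -/
import Mathlib

section
/- Let (X, μ) be a measure space and let s, q : X → ℝ be probability densities with respect to μ, with q > 0 μ-a.e., such that (s−q)²/q is μ-integrable. For γ ∈ (0,1] set y_γ := (1−γ)·q + γ·s. Then (2/γ²)·∫ y_γ·log(y_γ/q) dμ tends to ∫ (s−q)²/q dμ as γ → 0⁺. -/
/-!
With `g = (s - q) / q` one has `y_γ / q = 1 + γ g`, and since `∫ y_γ = ∫ q` the divergence equals
the `f`-divergence `∫ q · klFun (1 + γ g)`, where `klFun x = x log x + 1 - x`. As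
`klFun 1 = klFun' 1 = 0` and `klFun'' 1 = 1`, L'Hôpital gives `klFun (1 + γ g) / γ² → g² / 2`
pointwise, while `0 ≤ klFun x ≤ (x - 1)²` on `x ≥ 0` dominates `q · klFun (1 + γ g) / γ²` by
`q g² = (s - q)² / q` for `γ ∈ (0, 1]`. Dominated convergence finishes the proof.
-/

open MeasureTheory Filter Real Topology InformationTheory

namespace InformationTheory

lemma klFun_le_sq_sub_one {x : ℝ} (hx : 0 ≤ x) : klFun x ≤ (x - 1) ^ 2 := by
  have hlog : x * log x ≤ x * (x - 1) := by
    rcases hx.eq_or_lt with rfl | hx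
    · simp
    · exact mul_le_mul_of_nonneg_left (log_le_sub_one_of_pos hx) hx.le
  rw [klFun_apply]
  nlinarith

lemma tendsto_klFun_div_sq_sub_one :
    Tendsto (fun x => klFun x / (x - 1) ^ 2) (𝓝[≠] 1) (𝓝 (1 / 2)) := by
  have hlog : Tendsto (fun x => log x / (2 * (x - 1))) (𝓝[≠] 1) (𝓝 (1 / 2)) := by
    have := (hasDerivAt_iff_tendsto_slope.mp (hasDerivAt_log one_ne_zero)).div_const 2
    refine (this.congr fun x => ?_).trans (by norm_num)
    rw [slope_def_field, log_one, sub_zero, div_div, mul_comm]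
  have hne : ∀ᶠ x in 𝓝[≠] (1 : ℝ), x ≠ 0 :=
    nhdsWithin_le_nhds (isOpen_ne.mem_nhds one_ne_zero)
  refine HasDerivAt.lhopital_zero_nhdsNE (f' := log) (g' := fun x => 2 * (x - 1)) ?_ ?_ ?_ ?_ ?_ hlog
  · filter_upwards [hne] with x hx using hasDerivAt_klFun hx
  · filter_upwards with x
    simpa using ((hasDerivAt_id x).sub_const 1).fun_pow 2
  · filter_upwards [self_mem_nhdsWithin] with x hx
    exact mul_ne_zero two_ne_zero (sub_ne_zero.mpr hx)
  · simpa [klFun_one] using (continuous_klFun.tendsto 1).mono_left nhdsWithin_le_nhds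
  · have : Tendsto (fun x : ℝ => (x - 1) ^ 2) (𝓝 1) (𝓝 ((1 - 1) ^ 2)) := by
      exact ((continuous_id.sub continuous_const).pow 2).tendsto 1
    simpa using this.mono_left nhdsWithin_le_nhds

lemma tendsto_klFun_one_add_mul_div_sq (c : ℝ) :
    Tendsto (fun γ => klFun (1 + γ * c) / γ ^ 2) (𝓝[≠] 0) (𝓝 (c ^ 2 / 2)) := by
  rcases eq_or_ne c 0 with rfl | hc
  · simp [klFun_one]
  have hu : Tendsto (fun γ : ℝ => 1 + γ * c) (𝓝[≠] 0) (𝓝[≠] 1) := by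
    refine tendsto_nhdsWithin_of_tendsto_nhds_of_eventually_within _ ?_ ?_
    · have : Tendsto (fun γ : ℝ => 1 + γ * c) (𝓝 0) (𝓝 (1 + 0 * c)) :=
        (continuous_const.add (continuous_id.mul continuous_const)).tendsto 0
      simpa using this.mono_left nhdsWithin_le_nhds
    · filter_upwards [self_mem_nhdsWithin] with γ hγ
      simpa using mul_ne_zero hγ hc
  have key := (tendsto_klFun_div_sq_sub_one.comp hu).const_mul (c ^ 2)
  rw [show c ^ 2 * (1 / 2) = c ^ 2 / 2 by ring] at key
  refine key.congr' ?_
  filter_upwards [self_mem_nhdsWithin] with γ hγ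
  have hγ : γ ≠ 0 := hγ
  simp only [Function.comp_apply, add_sub_cancel_left]
  field_simp

lemma norm_mul_klFun_one_add_mul_le {a g γ : ℝ} (ha : 0 ≤ a) (hg : -1 ≤ g)
    (hγ : γ ∈ Set.Icc 0 1) : ‖a * klFun (1 + γ * g)‖ ≤ γ ^ 2 * (a * g ^ 2) := by
  have hx : 0 ≤ 1 + γ * g := by nlinarith [hγ.1, hγ.2]
  have hle : klFun (1 + γ * g) ≤ γ ^ 2 * g ^ 2 := by
    simpa [mul_pow] using klFun_le_sq_sub_one hx
  rw [Real.norm_of_nonneg (mul_nonneg ha (klFun_nonneg hx))]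
  nlinarith

section

variable {X : Type*} [MeasurableSpace X] {μ : Measure X} {q g : X → ℝ}

lemma integrable_mul_klFun_one_add_mul (hq : ∀ᵐ x ∂μ, 0 ≤ q x) (hg : ∀ᵐ x ∂μ, -1 ≤ g x)
    (hqm : AEStronglyMeasurable q μ) (hgm : AEStronglyMeasurable g μ)
    (hint : Integrable (fun x => q x * g x ^ 2) μ) {γ : ℝ} (hγ : γ ∈ Set.Icc 0 1) :
    Integrable (fun x => q x * klFun (1 + γ * g x)) μ := by
  refine (hint.const_mul (γ ^ 2)).mono'
    (hqm.mul (continuous_klFun.comp_aestronglyMeasurable ((hgm.const_mul γ).const_add 1))) ?_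
  filter_upwards [hq, hg] with x hqx hgx using norm_mul_klFun_one_add_mul_le hqx hgx hγ

theorem tendsto_integral_mul_klFun_one_add_mul_div_sq (hq : ∀ᵐ x ∂μ, 0 ≤ q x)
    (hg : ∀ᵐ x ∂μ, -1 ≤ g x) (hqm : AEStronglyMeasurable q μ) (hgm : AEStronglyMeasurable g μ)
    (hint : Integrable (fun x => q x * g x ^ 2) μ) :
    Tendsto (fun γ => (∫ x, q x * klFun (1 + γ * g x) ∂μ) / γ ^ 2) (𝓝[>] 0)
      (𝓝 ((∫ x, q x * g x ^ 2 ∂μ) / 2)) := by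
  simp only [← integral_div]
  refine tendsto_integral_filter_of_dominated_convergence _ ?_ ?_ hint ?_
  · filter_upwards with γ
    have := continuous_klFun
    fun_prop
  · filter_upwards [Ioc_mem_nhdsGT one_pos] with γ hγ
    filter_upwards [hq, hg] with x hqx hgx
    have hγ2 : 0 < γ ^ 2 := pow_pos hγ.1 2
    rw [norm_div, Real.norm_of_nonneg hγ2.le, div_le_iff₀' hγ2]
    exact norm_mul_klFun_one_add_mul_le hqx hgx (Set.Ioc_subset_Icc_self hγ)
  · filter_upwards with x
    have := ((tendsto_klFun_one_add_mul_div_sq (g x)).mono_left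
      (nhdsGT_le_nhdsNE 0)).const_mul (q x)
    simpa only [mul_div_assoc] using this

lemma integral_mul_log_div_eq_integral_mul_klFun {p : X → ℝ} (hq : ∀ᵐ x ∂μ, 0 < q x)
    (hpi : Integrable p μ) (hqi : Integrable q μ) (hpq : ∫ x, p x ∂μ = ∫ x, q x ∂μ)
    (hkl : Integrable (fun x => q x * klFun (p x / q x)) μ) :
    ∫ x, p x * log (p x / q x) ∂μ = ∫ x, q x * klFun (p x / q x) ∂μ := by
  have hpt : ∀ᵐ x ∂μ, p x * log (p x / q x) = q x * klFun (p x / q x) - (q x - p x) := by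
    filter_upwards [hq] with x hx
    rw [klFun_apply]
    field_simp
    ring
  have hqp : Integrable (fun x => q x - p x) μ := hqi.sub hpi
  rw [integral_congr_ae hpt, integral_sub hkl hqp, integral_sub hqi hpi, hpq,
    sub_self, sub_zero]

lemma integral_mix_mul_log_div_eq_integral_mul_klFun {p : X → ℝ} (hq : ∀ᵐ x ∂μ, 0 < q x)
    (hpi : Integrable p μ) (hqi : Integrable q μ) (hpq : ∫ x, p x ∂μ = ∫ x, q x ∂μ) (γ : ℝ)
    (hkl : Integrable (fun x => q x * klFun (1 + γ * ((p x - q x) / q x))) μ) :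
    ∫ x, ((1 - γ) * q x + γ * p x) * log (((1 - γ) * q x + γ * p x) / q x) ∂μ =
      ∫ x, q x * klFun (1 + γ * ((p x - q x) / q x)) ∂μ := by
  have hy : (fun x => q x * klFun (((1 - γ) * q x + γ * p x) / q x)) =ᵐ[μ]
      fun x => q x * klFun (1 + γ * ((p x - q x) / q x)) := by
    filter_upwards [hq] with x hqx
    congr 2
    field_simp
    ring
  have hyint : Integrable (fun x => (1 - γ) * q x + γ * p x) μ :=
    (hqi.const_mul _).add (hpi.const_mul _)
  have hyq : ∫ x, (1 - γ) * q x + γ * p x ∂μ = ∫ x, q x ∂μ := by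
    rw [integral_add (hqi.const_mul _) (hpi.const_mul _), integral_const_mul,
      integral_const_mul, hpq]
    ring
  rw [integral_mul_log_div_eq_integral_mul_klFun hq hyint hqi hyq (hkl.congr hy.symm),
    integral_congr_ae hy]

end

end InformationTheory

/-- The limit computed (via L'Hospital's rule) in the proof of Theorem 2: for probability
densities `s, q` with `q > 0` a.e. and `(s-q)²/q` integrable, writing
`y_γ = (1-γ)q + γs`, the curvature ratio `(2/γ²) D_KL(y_γ‖q)` tends to the χ² divergence
`∫ (s-q)²/q dμ` as `γ → 0⁺`. -/
theorem kl_curvature_ratio_tendsto_chiSq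
    {X : Type*} [MeasurableSpace X] (μ : Measure X)
    (s q : X → ℝ) (hs : Measurable s) (hq : Measurable q)
    (hsnn : ∀ᵐ x ∂μ, 0 ≤ s x) (hqpos : ∀ᵐ x ∂μ, 0 < q x)
    (hsone : ∫ x, s x ∂μ = 1) (hqone : ∫ x, q x ∂μ = 1)
    (hchi : Integrable (fun x => (s x - q x) ^ 2 / q x) μ) :
    Tendsto (fun γ : ℝ => (2 / γ ^ 2) *
        ∫ x, ((1 - γ) * q x + γ * s x) *
          Real.log (((1 - γ) * q x + γ * s x) / q x) ∂μ)
      (nhdsWithin 0 (Set.Ioi 0))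
      (nhds (∫ x, (s x - q x) ^ 2 / q x ∂μ)) := by
  have hsint : Integrable s μ := .of_integral_ne_zero (by simp [hsone])
  have hqint : Integrable q μ := .of_integral_ne_zero (by simp [hqone])
  have hq0 : ∀ᵐ x ∂μ, 0 ≤ q x := hqpos.mono fun _ => le_of_lt
  let g x := (s x - q x) / q x
  have hgm : AEStronglyMeasurable g μ := ((hs.sub hq).div hq).aestronglyMeasurable
  have hg : ∀ᵐ x ∂μ, -1 ≤ g x := by
    filter_upwards [hsnn, hqpos] with x hsx hqx
    rw [le_div_iff₀ hqx]
    linarith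
  have hqg : (fun x => q x * g x ^ 2) =ᵐ[μ] fun x => (s x - q x) ^ 2 / q x := by
    filter_upwards [hqpos] with x hqx
    simp only [g]
    field_simp
  have hqgint : Integrable (fun x => q x * g x ^ 2) μ := (integrable_congr hqg).mpr hchi
  have hlim := tendsto_integral_mul_klFun_one_add_mul_div_sq hq0 hg hq.aestronglyMeasurable hgm
    hqgint
  rw [integral_congr_ae hqg] at hlim
  refine ((hlim.const_mul 2).congr' ?_).trans (by rw [mul_div_cancel₀ _ two_ne_zero])
  filter_upwards [Ioc_mem_nhdsGT one_pos] with γ hγ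
  rw [integral_mix_mul_log_div_eq_integral_mul_klFun hqpos hsint hqint (hsone.trans hqone.symm) γ
    (integrable_mul_klFun_one_add_mul hq0 hg hq.aestronglyMeasurable hgm hqgint
      (Set.Ioc_subset_Icc_self hγ))]
  ring
end

section
/- Let (X, μ) be a measure space and let s, q : X → ℝ be probability densities with respect to μ, with q > 0 μ-a.e., such that (s−q)²/q is μ-integrable. For every γ ∈ (0,1], with y_γ := (1−γ)·q + γ·s, one has (2/γ²)·∫ y_γ·log(y_γ/q) dμ ≤ 2·∫ (s−q)²/q dμ. In particular, sup_{γ∈(0,1]} (2/γ²)·D_KL(y_γ‖q) is finite. -/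
open MeasureTheory

/-!
Pointwise, `log t ≤ t - 1` with `t = y/q` gives `y log (y/q) ≤ (y - q)²/q + (y - q)`, and
`log t ≥ 1 - 1/t` gives `y log (y/q) ≥ y - q`. Integrating, the first bound shows
`D_KL(y‖q) ≤ χ²(y‖q)` whenever `∫ y = ∫ q`, and the second one provides the integrability.
For the mixture `y_γ = q + γ (s - q)` the χ² divergence is `γ² χ²(s‖q)`, so the ratio
`(2/γ²) D_KL(y_γ‖q)` is at most `2 χ²(s‖q)`.
-/

namespace Real

lemma sub_le_mul_log_div {y q : ℝ} (hy : 0 ≤ y) (hq : 0 < q) : y - q ≤ y * log (y / q) := by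
  obtain rfl | hy := hy.eq_or_lt
  · simpa using hq.le
  calc y - q = y * (1 - (y / q)⁻¹) := by field_simp
    _ ≤ y * log (y / q) := by gcongr; exact one_sub_inv_le_log_of_pos (by positivity)

lemma mul_log_div_le {y q : ℝ} (hy : 0 ≤ y) (hq : 0 < q) :
    y * log (y / q) ≤ (y - q) ^ 2 / q + (y - q) := by
  obtain rfl | hy := hy.eq_or_lt
  · simp [sq, hq.ne']
  calc y * log (y / q) ≤ y * (y / q - 1) := by
        gcongr; exact log_le_sub_one_of_pos (by positivity)
    _ = (y - q) ^ 2 / q + (y - q) := by field_simp; ring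

end Real

section KLChiSq

variable {X : Type*} [MeasurableSpace X] {μ : Measure X} {y q : X → ℝ}

lemma integrable_mul_log_div (hy0 : ∀ᵐ x ∂μ, 0 ≤ y x) (hqpos : ∀ᵐ x ∂μ, 0 < q x)
    (hy : Integrable y μ) (hq : Integrable q μ)
    (hchi : Integrable (fun x => (y x - q x) ^ 2 / q x) μ) :
    Integrable (fun x => y x * Real.log (y x / q x)) μ := by
  have hmeas : AEStronglyMeasurable (fun x => y x * Real.log (y x / q x)) μ :=
    (hy.aemeasurable.mul (hy.aemeasurable.div hq.aemeasurable).log).aestronglyMeasurable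
  refine integrable_of_le_of_le hmeas ?_ ?_ (hy.sub hq) (hchi.add (hy.sub hq))
  · filter_upwards [hy0, hqpos] with x hyx hqx using Real.sub_le_mul_log_div hyx hqx
  · filter_upwards [hy0, hqpos] with x hyx hqx using Real.mul_log_div_le hyx hqx

lemma integral_mul_log_div_le_integral_sq_sub_div (hy0 : ∀ᵐ x ∂μ, 0 ≤ y x)
    (hqpos : ∀ᵐ x ∂μ, 0 < q x) (hy : Integrable y μ) (hq : Integrable q μ)
    (hmass : ∫ x, y x ∂μ = ∫ x, q x ∂μ)
    (hchi : Integrable (fun x => (y x - q x) ^ 2 / q x) μ) :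
    ∫ x, y x * Real.log (y x / q x) ∂μ ≤ ∫ x, (y x - q x) ^ 2 / q x ∂μ := by
  calc ∫ x, y x * Real.log (y x / q x) ∂μ
      ≤ ∫ x, ((y x - q x) ^ 2 / q x + (y x - q x)) ∂μ := by
        refine integral_mono_ae (integrable_mul_log_div hy0 hqpos hy hq hchi)
          (hchi.add (hy.sub hq)) ?_
        filter_upwards [hy0, hqpos] with x hyx hqx using Real.mul_log_div_le hyx hqx
    _ = ∫ x, (y x - q x) ^ 2 / q x ∂μ := by
        rw [integral_add (g := fun x => y x - q x) hchi (hy.sub hq),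
          integral_sub hy hq, hmass, sub_self, add_zero]

end KLChiSq

theorem kl_curvature_ratio_bounded_general
    {X : Type*} [MeasurableSpace X] (μ : Measure X)
    (s q : X → ℝ)
    (hsnn : ∀ᵐ x ∂μ, 0 ≤ s x) (hqpos : ∀ᵐ x ∂μ, 0 < q x)
    (hsone : ∫ x, s x ∂μ = 1) (hqone : ∫ x, q x ∂μ = 1)
    (hchi : Integrable (fun x => (s x - q x) ^ 2 / q x) μ) :
    (∀ γ ∈ Set.Ioc (0 : ℝ) 1,
      (2 / γ ^ 2) * ∫ x, ((1 - γ) * q x + γ * s x) *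
          Real.log (((1 - γ) * q x + γ * s x) / q x) ∂μ
        ≤ 2 * ∫ x, (s x - q x) ^ 2 / q x ∂μ) ∧
    BddAbove ((fun γ : ℝ => (2 / γ ^ 2) *
        ∫ x, ((1 - γ) * q x + γ * s x) *
          Real.log (((1 - γ) * q x + γ * s x) / q x) ∂μ) '' Set.Ioc (0 : ℝ) 1) := by
  have hs : Integrable s μ := .of_integral_ne_zero (by simp [hsone])
  have hq : Integrable q μ := .of_integral_ne_zero (by simp [hqone])
  have bound : ∀ γ ∈ Set.Ioc (0 : ℝ) 1,
      (2 / γ ^ 2) * ∫ x, ((1 - γ) * q x + γ * s x) *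
          Real.log (((1 - γ) * q x + γ * s x) / q x) ∂μ
        ≤ 2 * ∫ x, (s x - q x) ^ 2 / q x ∂μ := by
    rintro γ ⟨hγ0, hγ1⟩
    have hchi_mix : (fun x => ((1 - γ) * q x + γ * s x - q x) ^ 2 / q x)
        = fun x => γ ^ 2 * ((s x - q x) ^ 2 / q x) := by
      ext x; ring
    have hy : Integrable (fun x => (1 - γ) * q x + γ * s x) μ :=
      (hq.const_mul _).add (hs.const_mul _)
    have hy0 : ∀ᵐ x ∂μ, 0 ≤ (1 - γ) * q x + γ * s x := by
      filter_upwards [hsnn, hqpos] with x hsx hqx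
      have : 0 ≤ 1 - γ := by linarith
      positivity
    have hmass : ∫ x, ((1 - γ) * q x + γ * s x) ∂μ = ∫ x, q x ∂μ := by
      rw [integral_add (hq.const_mul _) (hs.const_mul _), integral_const_mul,
        integral_const_mul, hsone, hqone]
      ring
    have hkl := integral_mul_log_div_le_integral_sq_sub_div hy0 hqpos hy hq hmass
      (by rw [hchi_mix]; exact hchi.const_mul _)
    rw [hchi_mix, integral_const_mul] at hkl
    calc (2 / γ ^ 2) * ∫ x, ((1 - γ) * q x + γ * s x) *
          Real.log (((1 - γ) * q x + γ * s x) / q x) ∂μ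
        ≤ (2 / γ ^ 2) * (γ ^ 2 * ∫ x, (s x - q x) ^ 2 / q x ∂μ) := by gcongr
      _ = 2 * ∫ x, (s x - q x) ^ 2 / q x ∂μ := by field_simp
  exact ⟨bound, ⟨_, Set.forall_mem_image.2 bound⟩⟩

/-- Quantitative core of Theorem 2: for probability densities `s, q` with `q > 0` a.e.
and `(s-q)²/q` integrable, writing `y_γ = (1-γ)q + γs`, the Frank-Wolfe curvature ratio
`(2/γ²) D_KL(y_γ‖q)` is bounded by twice the χ² divergence `∫ (s-q)²/q dμ` uniformly in
`γ ∈ (0,1]`; in particular its supremum over `γ ∈ (0,1]` is finite. -/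
theorem kl_curvature_ratio_bounded
    {X : Type*} [MeasurableSpace X] (μ : Measure X)
    (s q : X → ℝ) (hs : Measurable s) (hq : Measurable q)
    (hsnn : ∀ᵐ x ∂μ, 0 ≤ s x) (hqpos : ∀ᵐ x ∂μ, 0 < q x)
    (hsone : ∫ x, s x ∂μ = 1) (hqone : ∫ x, q x ∂μ = 1)
    (hchi : Integrable (fun x => (s x - q x) ^ 2 / q x) μ) :
    (∀ γ ∈ Set.Ioc (0 : ℝ) 1,
      (2 / γ ^ 2) * ∫ x, ((1 - γ) * q x + γ * s x) *
          Real.log (((1 - γ) * q x + γ * s x) / q x) ∂μ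
        ≤ 2 * ∫ x, (s x - q x) ^ 2 / q x ∂μ) ∧
    BddAbove ((fun γ : ℝ => (2 / γ ^ 2) *
        ∫ x, ((1 - γ) * q x + γ * s x) *
          Real.log (((1 - γ) * q x + γ * s x) / q x) ∂μ) '' Set.Ioc (0 : ℝ) 1) :=
  kl_curvature_ratio_bounded_general μ s q hsnn hqpos hsone hqone hchi
end

section
/- Let (X, μ) be a measure space, let p : X → ℝ be measurable and positive μ-a.e., and let S be a nonempty set of probability densities with respect to μ, each positive μ-a.e. and satisfying the integrability conditions making all integrals below finite. Fix q ∈ S, and suppose q* ∈ S attains the minimum of s ↦ D_KL(s‖p) := ∫ s·log(s/p) dμ over S, and that the duality gap g(q) := sup_{s∈S} ∫ (q − s)·log(q/p) dμ is finite. Then g(q) ≥ D_KL(q‖p) − D_KL(q*‖p); i.e., the duality gap at q is an upper bound on the primal error. -/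
open MeasureTheory

/-- Lemma 5 of the paper: the duality gap `g(q) = sup_{s∈S} ∫ (q-s) log(q/p) dμ` at an
iterate `q ∈ S` is an upper bound on the primal error `D_KL(q‖p) - D_KL(q*‖p)`, where
`q*` minimizes `s ↦ D_KL(s‖p) = ∫ s log(s/p) dμ` over `S`. -/
theorem duality_gap_ge_primal_error
    {X : Type*} [MeasurableSpace X] (μ : Measure X)
    (p : X → ℝ) (hp : Measurable p) (hppos : ∀ᵐ x ∂μ, 0 < p x)
    (S : Set (X → ℝ)) (hS : S.Nonempty)
    (hdens : ∀ s ∈ S, Measurable s ∧ (∀ᵐ x ∂μ, 0 < s x) ∧ ∫ x, s x ∂μ = 1)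
    (q : X → ℝ) (hq : q ∈ S)
    (h1 : ∀ s ∈ S, Integrable (fun x => s x * Real.log (s x / p x)) μ)
    (h2 : ∀ s ∈ S, Integrable (fun x => (q x - s x) * Real.log (q x / p x)) μ)
    (h3 : ∀ s ∈ S, Integrable (fun x => s x * Real.log (s x / q x)) μ)
    (qstar : X → ℝ) (hqstar : qstar ∈ S)
    (hmin : ∀ s ∈ S, ∫ x, qstar x * Real.log (qstar x / p x) ∂μ
        ≤ ∫ x, s x * Real.log (s x / p x) ∂μ)
    (hbdd : BddAbove
        ((fun s : X → ℝ => ∫ x, (q x - s x) * Real.log (q x / p x) ∂μ) '' S)) :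
    sSup ((fun s : X → ℝ => ∫ x, (q x - s x) * Real.log (q x / p x) ∂μ) '' S)
      ≥ ∫ x, q x * Real.log (q x / p x) ∂μ
          - ∫ x, qstar x * Real.log (qstar x / p x) ∂μ := by

  obtain ⟨hqm, hqpos, hqint⟩ := hdens q hq
  obtain ⟨hsm, hspos, hsint⟩ := hdens qstar hqstar
  have hq_int : Integrable q μ := by
    by_contra h
    rw [integral_undef h] at hqint; norm_num at hqint
  have hs_int : Integrable qstar μ := by
    by_contra h
    rw [integral_undef h] at hsint; norm_num at hsint
  -- Gibbs inequality: ∫ q* log(q*/q) ≥ 0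
  have hGibbs : 0 ≤ ∫ x, qstar x * Real.log (qstar x / q x) ∂μ := by
    have hle : ∀ᵐ x ∂μ, -(qstar x * Real.log (qstar x / q x)) ≤ q x - qstar x := by
      filter_upwards [hqpos, hspos] with x hx1 hx2
      have hlog := Real.log_le_sub_one_of_pos (div_pos hx1 hx2)
      have h4 : Real.log (qstar x / q x) = -Real.log (q x / qstar x) := by
        rw [Real.log_div hx2.ne' hx1.ne', Real.log_div hx1.ne' hx2.ne']; ring
      rw [h4]
      have : qstar x * (q x / qstar x) = q x := by field_simp
      nlinarith [mul_le_mul_of_nonneg_left hlog hx2.le]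
    have hI := integral_mono_ae ((h3 qstar hqstar).neg) (hq_int.sub hs_int) hle
    simp only [Pi.neg_apply, Pi.sub_apply] at hI
    rw [integral_neg, integral_sub hq_int hs_int, hqint, hsint] at hI
    linarith
  -- integrability of q* log(q/p)
  have hint1 : Integrable (fun x => qstar x * Real.log (q x / p x)) μ := by
    have := (h1 q hq).sub (h2 qstar hqstar)
    apply this.congr
    filter_upwards with x
    simp only [Pi.sub_apply]
    ring
  -- ∫ q* log(q/p) ≤ ∫ q* log(q*/p)
  have hstep : ∫ x, qstar x * Real.log (q x / p x) ∂μ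
      ≤ ∫ x, qstar x * Real.log (qstar x / p x) ∂μ := by
    have heq : ∫ x, (qstar x * Real.log (qstar x / p x) - qstar x * Real.log (q x / p x)) ∂μ
        = ∫ x, qstar x * Real.log (qstar x / q x) ∂μ := by
      apply integral_congr_ae
      filter_upwards [hqpos, hspos, hppos] with x hx1 hx2 hx3
      rw [Real.log_div hx2.ne' hx3.ne', Real.log_div hx1.ne' hx3.ne',
        Real.log_div hx2.ne' hx1.ne']
      ring
    rw [integral_sub (h1 qstar hqstar) hint1] at heq
    linarith
  -- split the gap at q*
  have hsplit : ∫ x, (q x - qstar x) * Real.log (q x / p x) ∂μ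
      = ∫ x, q x * Real.log (q x / p x) ∂μ - ∫ x, qstar x * Real.log (q x / p x) ∂μ := by
    rw [← integral_sub (h1 q hq) hint1]
    congr 1; funext x; ring
  have hmem : ∫ x, (q x - qstar x) * Real.log (q x / p x) ∂μ
      ∈ (fun s : X → ℝ => ∫ x, (q x - s x) * Real.log (q x / p x) ∂μ) '' S :=
    ⟨qstar, hqstar, rfl⟩
  have := le_csSup hbdd hmem
  linarith
end

section
/- Let H be a real inner product space, let f : H → ℝ, let q, s̃, q* ∈ H, let g ∈ H (playing the role of the gradient of f at q), let γ ∈ [0,1], δ ∈ (0,1], and C ≥ 0. Assume: (i) the curvature bound f(q + γ(s̃ − q)) ≤ f(q) + γ·⟨g, s̃ − q⟩ + (γ²/2)·C, where g is the gradient of f at q; (ii) the approximate LMO condition ⟨g, s̃ − q⟩ ≤ δ·⟨g, q* − q⟩; and (iii) the convexity inequality f(q*) ≥ f(q) + ⟨g, q* − q⟩. Then f(q + γ(s̃ − q)) − f(q*) ≤ (1 − δγ)·(f(q) − f(q*)) + (γ²/2)·C. -/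
open scoped RealInnerProductSpace

/-- Per-iteration descent inequality underlying Theorem 1 of the paper: one Frank-Wolfe
step `q ↦ q + γ(s̃ - q)` with step size `γ ∈ [0,1]`, using (i) a curvature bound `C ≥ 0`,
(ii) an approximate LMO of multiplicative quality `δ ∈ (0,1]` and (iii) convexity at `q`
(encoded via the gradient vector `g` of `f` at `q`), contracts the primal error:
`f(q + γ(s̃-q)) - f(q*) ≤ (1 - δγ)(f(q) - f(q*)) + (γ²/2) C`. -/
theorem fw_descent_step
    {H : Type*} [NormedAddCommGroup H] [InnerProductSpace ℝ H]
    (f : H → ℝ) (q stilde qstar : H) (g : H)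
    (γ : ℝ) (hγ : γ ∈ Set.Icc (0 : ℝ) 1)
    (δ : ℝ) (hδ : δ ∈ Set.Ioc (0 : ℝ) 1)
    (C : ℝ) (hC : 0 ≤ C)
    (hcurv : f (q + γ • (stilde - q)) ≤ f q + γ * ⟪g, stilde - q⟫ + (γ ^ 2 / 2) * C)
    (hlmo : ⟪g, stilde - q⟫ ≤ δ * ⟪g, qstar - q⟫)
    (hconv : f qstar ≥ f q + ⟪g, qstar - q⟫) :
    f (q + γ • (stilde - q)) - f qstar
      ≤ (1 - δ * γ) * (f q - f qstar) + (γ ^ 2 / 2) * C := by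
  obtain ⟨h0,h1⟩ := hγ
  obtain ⟨h2,h3⟩ := hδ
  nlinarith [mul_le_mul_of_nonneg_left hlmo h0, mul_nonneg (mul_nonneg h2.le h0) (sub_nonneg.2 (le_of_lt (lt_of_le_of_lt h3 (by linarith) : δ < 2)))]
end

section
/- Let δ ∈ (0,1], C ≥ 0, and let h : ℕ → ℝ be a nonnegative sequence satisfying, for every t ≥ 0, h(t+1) ≤ (1 − δ·γ_t)·h(t) + (γ_t²/2)·C where γ_t := 2/(δ·t + 2). Then for every t ≥ 0, h(t) ≤ 2·(C/δ + h(0)) / (δ·t + 2). -/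
/-! With `s = δt + 2` and `B = C/δ + h 0`, the bound `h t ≤ 2B/s` propagates: since `C ≤ δB`,
one step of the recurrence gives `h (t+1) ≤ 2B(s - δ)/s²`, and `(s - δ)(s + δ) ≤ s²`. -/

lemma sub_div_sq_le_inv_add {s δ : ℝ} (hs : 0 < s) (hsδ : 0 < s + δ) :
    (s - δ) / s ^ 2 ≤ (s + δ)⁻¹ := by
  rw [div_le_iff₀ (by positivity), inv_mul_eq_div, le_div_iff₀ hsδ]
  nlinarith [sq_nonneg δ]

lemma rate_bound_step {δ B C s x y : ℝ} (hδ : 0 < δ) (hs : 2 * δ ≤ s) (hB : 0 ≤ B)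
    (hCB : C ≤ δ * B) (hx : x ≤ 2 * B / s)
    (hy : y ≤ (1 - δ * (2 / s)) * x + ((2 / s) ^ 2 / 2) * C) :
    y ≤ 2 * B / (s + δ) := by
  have hs0 : 0 < s := by linarith
  have hγ : 0 ≤ 1 - δ * (2 / s) := by
    rw [sub_nonneg, mul_div_assoc', div_le_one hs0]
    linarith
  calc y ≤ (1 - δ * (2 / s)) * (2 * B / s) + ((2 / s) ^ 2 / 2) * (δ * B) :=
        hy.trans (by gcongr)
    _ = 2 * B * ((s - δ) / s ^ 2) := by field_simp; ring
    _ ≤ 2 * B * (s + δ)⁻¹ := by gcongr; exact sub_div_sq_le_inv_add hs0 (by linarith)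
    _ = 2 * B / (s + δ) := (div_eq_mul_inv _ _).symm

/-- Scalar recurrence lemma converting the per-iteration Frank-Wolfe descent inequality
into the sublinear rate of Theorem 1: if `h : ℕ → ℝ` is nonnegative and satisfies
`h(t+1) ≤ (1 - δ γ_t) h(t) + (γ_t²/2) C` with `γ_t = 2/(δt+2)`, `δ ∈ (0,1]`, `C ≥ 0`,
then `h(t) ≤ 2 (C/δ + h(0)) / (δt + 2)` for every `t`. -/
theorem fw_rate_recurrence
    (δ C : ℝ) (hδ : δ ∈ Set.Ioc (0 : ℝ) 1) (hC : 0 ≤ C)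
    (h : ℕ → ℝ) (hnn : ∀ t, 0 ≤ h t)
    (hrec : ∀ t : ℕ, h (t + 1)
        ≤ (1 - δ * (2 / (δ * (t : ℝ) + 2))) * h t
          + ((2 / (δ * (t : ℝ) + 2)) ^ 2 / 2) * C) :
    ∀ t : ℕ, h t ≤ 2 * (C / δ + h 0) / (δ * (t : ℝ) + 2) := by
  obtain ⟨hδ0, hδ1⟩ := hδ
  have hCδ : 0 ≤ C / δ := div_nonneg hC hδ0.le
  have hB : 0 ≤ C / δ + h 0 := add_nonneg hCδ (hnn 0)
  have hCB : C ≤ δ * (C / δ + h 0) := by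
    rw [mul_add, mul_div_cancel₀ _ hδ0.ne']
    exact le_add_of_nonneg_right (mul_nonneg hδ0.le (hnn 0))
  intro t
  induction t with
  | zero => norm_num; linarith
  | succ t ih =>
    have hs : 2 * δ ≤ δ * t + 2 := by linarith [mul_nonneg hδ0.le t.cast_nonneg]
    have hshift : δ * ((t + 1 : ℕ) : ℝ) + 2 = (δ * t + 2) + δ := by push_cast; ring
    rw [hshift]
    exact rate_bound_step hδ0 hs hB hCB ih (hrec t)
end

section
/- Let H be a real inner product space, let A ⊆ H be nonempty, let f : H → ℝ be differentiable, let q* lie in the convex hull of A, let δ ∈ (0,1] and C ≥ 0. Let (q_t)_{t≥0} and (s_t)_{t≥0} be sequences with q_0 in the convex hull of A, s_t ∈ A, and q_{t+1} = (1 − γ_t)·q_t + γ_t·s_t where γ_t := 2/(δ·t + 2). Assume for every t: (i) the curvature bound f(q_t + γ·(s_t − q_t)) ≤ f(q_t) + γ·⟨∇f(q_t), s_t − q_t⟩ + (γ²/2)·C for all γ ∈ [0,1]; (ii) the approximate LMO condition ⟨∇f(q_t), s_t − q_t⟩ ≤ δ·⟨∇f(q_t), s − q_t⟩ for all s in the convex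 hull of A; (iii) the convexity inequality f(y) ≥ f(q_t) + ⟨∇f(q_t), y − q_t⟩ for all y in the convex hull of A; and (iv) f(q*) ≤ f(y) for all y in the convex hull of A. Then for every t ≥ 0, f(q_t) − f(q*) ≤ 2·(C/δ + (f(q_0) − f(q*))) / (δ·t + 2). -/
open scoped RealInnerProductSpace

/-!
Convexity at `q_t` and the approximate LMO give `⟨∇f(q_t), s_t - q_t⟩ ≤ -δ (f(q_t) - f(q*))`,
so the curvature bound turns into the recursion `e_{t+1} ≤ (1 - δγ_t) e_t + γ_t² C / 2` for the
primal gap `e_t`. With `γ_t = 2/(δt + 2)` the bound `e_t ≤ K/(δt + 2)` is then preserved by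
induction as soon as `2C ≤ δK`, which `K = 2(C/δ + e_0)` satisfies because `e_0 ≥ 0`.
-/

theorem two_div_mul_add_two_mem_Icc {δ : ℝ} (hδ : 0 ≤ δ) (t : ℕ) :
    2 / (δ * (t : ℝ) + 2) ∈ Set.Icc (0 : ℝ) 1 := by
  have hden : 2 ≤ δ * (t : ℝ) + 2 := by have := mul_nonneg hδ t.cast_nonneg; linarith
  exact ⟨by positivity, (div_le_one (by linarith)).2 hden⟩

theorem frankWolfe_gap_step {fq fnext fstar d dstar γ δ C : ℝ} (hγ : 0 ≤ γ) (hδ : 0 ≤ δ)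
    (hcurv : fnext ≤ fq + γ * d + γ ^ 2 / 2 * C) (hlmo : d ≤ δ * dstar)
    (hconv : fq + dstar ≤ fstar) :
    fnext - fstar ≤ (1 - δ * γ) * (fq - fstar) + γ ^ 2 / 2 * C := by
  have hd : γ * d ≤ γ * (δ * (fstar - fq)) :=
    mul_le_mul_of_nonneg_left (hlmo.trans (by gcongr; linarith)) hγ
  linarith

theorem frankWolfe_rate_step {h δ K C : ℝ} (hh : 0 < h) (hδ : 0 ≤ δ) (hC : 0 ≤ C)
    (hK : 2 * C ≤ δ * K) :
    (1 - δ * (2 / h)) * (K / h) + (2 / h) ^ 2 / 2 * C ≤ K / (h + δ) := by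
  have hhδ : 0 < h + δ := by linarith
  have hgap : K / (h + δ) - ((1 - δ * (2 / h)) * (K / h) + (2 / h) ^ 2 / 2 * C)
      = (δ * K * (h + 2 * δ) - 2 * C * (h + δ)) / (h ^ 2 * (h + δ)) := by
    field_simp
    ring
  have hnum : 0 ≤ δ * K * (h + 2 * δ) - 2 * C * (h + δ) := by
    nlinarith [mul_nonneg (sub_nonneg.2 hK) hhδ.le, mul_nonneg hC hδ]
  exact sub_nonneg.1 (hgap ▸ div_nonneg hnum (by positivity))

theorem le_of_frankWolfe_recursion {δ C : ℝ} (e : ℕ → ℝ) (hδ : δ ∈ Set.Ioc (0 : ℝ) 1)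
    (hC : 0 ≤ C) (he0 : 0 ≤ e 0)
    (hrec : ∀ t : ℕ, e (t + 1) ≤ (1 - δ * (2 / (δ * t + 2))) * e t
      + (2 / (δ * (t : ℝ) + 2)) ^ 2 / 2 * C) :
    ∀ t : ℕ, e t ≤ 2 * (C / δ + e 0) / (δ * (t : ℝ) + 2) := by
  obtain ⟨hδ0, hδ1⟩ := hδ
  have hK : 2 * C ≤ δ * (2 * (C / δ + e 0)) := by
    have hCδ : δ * (C / δ) = C := mul_div_cancel₀ C hδ0.ne'
    linarith [mul_nonneg hδ0.le he0]
  intro t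
  induction t with
  | zero =>
    simp only [Nat.cast_zero, mul_zero, zero_add]
    linarith [div_nonneg hC hδ0.le]
  | succ t ih =>
    have hγ := two_div_mul_add_two_mem_Icc hδ0.le t
    have hcontr : 0 ≤ 1 - δ * (2 / (δ * t + 2)) :=
      sub_nonneg.2 ((mul_le_of_le_one_left hγ.1 hδ1).trans hγ.2)
    calc e (t + 1)
        ≤ (1 - δ * (2 / (δ * t + 2))) * e t + (2 / (δ * (t : ℝ) + 2)) ^ 2 / 2 * C := hrec t
      _ ≤ (1 - δ * (2 / (δ * t + 2))) * (2 * (C / δ + e 0) / (δ * t + 2))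
          + (2 / (δ * (t : ℝ) + 2)) ^ 2 / 2 * C := by gcongr
      _ ≤ 2 * (C / δ + e 0) / (δ * t + 2 + δ) := by
          refine frankWolfe_rate_step ?_ hδ0.le hC hK
          positivity
      _ = 2 * (C / δ + e 0) / (δ * ((t + 1 : ℕ) : ℝ) + 2) := by push_cast; ring_nf

theorem fw_convergence_general
    {H : Type*} [NormedAddCommGroup H] [InnerProductSpace ℝ H]
    (A : Set H)
    (f : H → ℝ)
    (qstar : H) (hqstar : qstar ∈ convexHull ℝ A)
    (δ C : ℝ) (hδ : δ ∈ Set.Ioc (0 : ℝ) 1) (hC : 0 ≤ C)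
    (q s : ℕ → H)
    (hq0 : q 0 ∈ convexHull ℝ A)
    (hupd : ∀ t : ℕ, q (t + 1)
        = (1 - 2 / (δ * (t : ℝ) + 2)) • q t + (2 / (δ * (t : ℝ) + 2)) • s t)
    (hcurv : ∀ t : ℕ, ∀ γ ∈ Set.Icc (0 : ℝ) 1,
        f (q t + γ • (s t - q t))
          ≤ f (q t) + γ * fderiv ℝ f (q t) (s t - q t) + (γ ^ 2 / 2) * C)
    (hlmo : ∀ t : ℕ, ∀ y ∈ convexHull ℝ A,
        fderiv ℝ f (q t) (s t - q t) ≤ δ * fderiv ℝ f (q t) (y - q t))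
    (hconv : ∀ t : ℕ, ∀ y ∈ convexHull ℝ A,
        f y ≥ f (q t) + fderiv ℝ f (q t) (y - q t))
    (hmin : ∀ y ∈ convexHull ℝ A, f qstar ≤ f y) :
    ∀ t : ℕ, f (q t) - f qstar
      ≤ 2 * (C / δ + (f (q 0) - f qstar)) / (δ * (t : ℝ) + 2) := by
  refine le_of_frankWolfe_recursion (fun t => f (q t) - f qstar) hδ hC
    (sub_nonneg.2 (hmin _ hq0)) fun t => ?_
  have hγ := two_div_mul_add_two_mem_Icc hδ.1.le t
  have hnext : q (t + 1) = q t + (2 / (δ * (t : ℝ) + 2)) • (s t - q t) := by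
    rw [hupd, ← AffineMap.lineMap_apply_module, AffineMap.lineMap_apply_module', add_comm]
  rw [hnext]
  exact frankWolfe_gap_step hγ.1 hδ.1.le (hcurv t _ hγ) (hlmo t qstar hqstar)
    (hconv t qstar hqstar).le

/-- Theorem 1 of the paper (convergence of the affine-invariant Frank-Wolfe algorithm
with fixed step size `γ_t = 2/(δt+2)`): if `f` is differentiable with, at every iterate,
(i) curvature bounded by `C` along segments toward the atoms `s_t ∈ A`, (ii) an
approximate LMO of multiplicative accuracy `δ ∈ (0,1]`, (iii) convexity of `f` on
`conv(A)` (gradient inequality), and (iv) `q*` minimizing `f` over `conv(A)`, then the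
iterates `q_{t+1} = (1-γ_t) q_t + γ_t s_t` satisfy
`f(q_t) - f(q*) ≤ 2 (C/δ + ε₀)/(δt + 2)` with `ε₀ = f(q_0) - f(q*)`. -/
theorem fw_convergence
    {H : Type*} [NormedAddCommGroup H] [InnerProductSpace ℝ H]
    (A : Set H) (hA : A.Nonempty)
    (f : H → ℝ) (hdiff : Differentiable ℝ f)
    (qstar : H) (hqstar : qstar ∈ convexHull ℝ A)
    (δ C : ℝ) (hδ : δ ∈ Set.Ioc (0 : ℝ) 1) (hC : 0 ≤ C)
    (q s : ℕ → H)
    (hq0 : q 0 ∈ convexHull ℝ A) (hsA : ∀ t, s t ∈ A)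
    (hupd : ∀ t : ℕ, q (t + 1)
        = (1 - 2 / (δ * (t : ℝ) + 2)) • q t + (2 / (δ * (t : ℝ) + 2)) • s t)
    (hcurv : ∀ t : ℕ, ∀ γ ∈ Set.Icc (0 : ℝ) 1,
        f (q t + γ • (s t - q t))
          ≤ f (q t) + γ * fderiv ℝ f (q t) (s t - q t) + (γ ^ 2 / 2) * C)
    (hlmo : ∀ t : ℕ, ∀ y ∈ convexHull ℝ A,
        fderiv ℝ f (q t) (s t - q t) ≤ δ * fderiv ℝ f (q t) (y - q t))
    (hconv : ∀ t : ℕ, ∀ y ∈ convexHull ℝ A,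
        f y ≥ f (q t) + fderiv ℝ f (q t) (y - q t))
    (hmin : ∀ y ∈ convexHull ℝ A, f qstar ≤ f y) :
    ∀ t : ℕ, f (q t) - f qstar
      ≤ 2 * (C / δ + (f (q 0) - f qstar)) / (δ * (t : ℝ) + 2) :=
  fw_convergence_general A f qstar hqstar δ C hδ hC q s hq0 hupd hcurv hlmo hconv hmin
end
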